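/- With F and S_α as defined above (F(X) containing (n,δ) iff δ = 0, or δ = γ+1 and (0,γ) ∈ X, or δ a nonzero limit and (0, δ_m) ∈ X for all m ≥ n, using fixed cofinal ω-chains (δ_m) in each nonzero countable limit δ), the map F converges to its least fixed point in exactly ω₁ steps: F^{ω₁}(∅) = ω × ω₁ is the least fixed point of F, and F^α(∅) ⊊ F^{α+1}(∅) for every α < ω₁. -/

import Mathlib

open Set

universe u v

/-- Ordinal-indexed iterates of a map on a powerset, starting from ∅,
taking unions at limit stages. -/
noncomputable def iter {A : Type u} (f : Set A → Set A) (o : Ordinal.{v}) : Set A :=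
  Ordinal.limitRecOn o ∅ (fun _ ih => f ih)
    (fun o _ ih => ⋃ (b : Ordinal.{v}) (h : b < o), ih b h)

/-- The least uncountable ordinal. -/
noncomputable def omega1 : Ordinal.{0} := (Cardinal.aleph 1).ord

/-- The set S_α = { (n, δ) : n < ω, δ < α } of the paper's model M_{ω₁}. -/
def Sset (α : Ordinal.{0}) : Set (ℕ × Ordinal.{0}) := {p | p.2 < α}

/-- The semantic action of the formula (ν_z.◇_v x ∧ ◇_h z) ∨ □_v ⊥ on M_{ω₁},
where `c δ` enumerates the chosen cofinal ω-chain in the limit ordinal δ. -/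
def Fop (c : Ordinal.{0} → ℕ → Ordinal.{0}) (X : Set (ℕ × Ordinal.{0})) :
    Set (ℕ × Ordinal.{0}) :=
  {p | p.2 < omega1 ∧ (p.2 = 0 ∨ (∃ γ, p.2 = γ + 1 ∧ (0, γ) ∈ X) ∨
    (Order.IsSuccLimit p.2 ∧ ∀ m ≥ p.1, (0, c p.2 m) ∈ X))}

/-!
By transfinite induction `F^α(∅) = S_α` for `α ≤ ω₁`. The only delicate inclusion is
`F(S_α) ⊆ S_{α+1}` at a limit `δ`: membership would put a whole tail of the chain `c δ` below `α`,
and a cofinal ω-sequence has terms above `α` in every tail unless `δ ≤ α`. The reverse inclusions,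
the fixed point `F(S_{ω₁}) = S_{ω₁}` and its leastness all come from one observation: `(n, δ) ∈ F(X)`
for `δ < ω₁` as soon as `(0, γ) ∈ X` for all `γ < δ`.
-/

section Iterate

variable {A : Type u} (f : Set A → Set A)

lemma iter_zero : iter f (0 : Ordinal.{v}) = ∅ :=
  Ordinal.limitRecOn_zero _ _ _

lemma iter_add_one (o : Ordinal.{v}) : iter f (o + 1) = f (iter f o) := by
  rw [iter, Ordinal.limitRecOn_add_one]
  rfl

lemma iter_of_isSuccLimit {o : Ordinal.{v}} (ho : Order.IsSuccLimit o) :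
    iter f o = ⋃ (b : Ordinal.{v}) (_ : b < o), iter f b :=
  Ordinal.limitRecOn_limit _ _ _ _ ho

end Iterate

lemma exists_ge_le_of_cofinal {β : Type*} [LinearOrder β] [OrderBot β] {δ : β}
    (hδ : Order.IsSuccLimit δ) {s : ℕ → β} (hs : ∀ m, s m < δ)
    (hcof : ∀ γ < δ, ∃ m, γ ≤ s m) {α : β} (hα : α < δ) (n : ℕ) :
    ∃ m ≥ n, α ≤ s m := by
  -- Go strictly above `α` and above the first `n` terms; the witness can then only lie past `n`.
  set M := (Finset.range n).sup s
  have hM : M < δ := (Finset.sup_lt_iff hδ.bot_lt).2 fun m _ => hs m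
  obtain ⟨γ, hγδ, hγ⟩ := hδ.lt_iff_exists_lt.1 (max_lt hα hM)
  obtain ⟨m, hm⟩ := hcof γ hγδ
  have hMγ : M < γ := (le_max_right _ _).trans_lt hγ
  refine ⟨m, ?_, (le_max_left _ _).trans (hγ.le.trans hm)⟩
  by_contra! hmn
  exact (hMγ.trans_le hm).not_ge (Finset.le_sup (Finset.mem_range.2 hmn))

@[simp]
lemma mem_Sset {p : ℕ × Ordinal.{0}} {α : Ordinal.{0}} : p ∈ Sset α ↔ p.2 < α := Iff.rfl

lemma Sset_strictMono : StrictMono Sset := fun α β hαβ =>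
  ⟨fun _ hp => lt_trans hp hαβ, fun h => lt_irrefl α (h (show (0, α) ∈ Sset β from hαβ))⟩

lemma iUnion_Sset_of_isSuccLimit {o : Ordinal.{0}} (ho : Order.IsSuccLimit o) :
    ⋃ (b : Ordinal.{0}) (_ : b < o), Sset b = Sset o := by
  ext p
  simp only [mem_iUnion, mem_Sset, exists_prop]
  exact ho.lt_iff_exists_lt.symm

section Fop

variable {c : Ordinal.{0} → ℕ → Ordinal.{0}}

lemma Fop_subset_Sset_omega1 (X : Set (ℕ × Ordinal.{0})) : Fop c X ⊆ Sset omega1 :=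
  fun _ hp => hp.1

lemma mem_Fop_of_forall_lt (hlt : ∀ δ, Order.IsSuccLimit δ → δ < omega1 → ∀ m, c δ m < δ)
    {X : Set (ℕ × Ordinal.{0})} (n : ℕ) {δ : Ordinal.{0}} (hδ : δ < omega1)
    (hX : ∀ γ < δ, (0, γ) ∈ X) : (n, δ) ∈ Fop c X := by
  refine ⟨hδ, ?_⟩
  rcases Ordinal.zero_or_succ_or_isSuccLimit δ with hzero | ⟨γ, rfl⟩ | hlim
  · exact Or.inl hzero
  · exact Or.inr (Or.inl ⟨γ, Order.succ_eq_add_one γ, hX γ (Order.lt_succ γ)⟩)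
  · exact Or.inr (Or.inr ⟨hlim, fun m _ => hX _ (hlt δ hlim hδ m)⟩)

lemma Sset_subset_Fop (hlt : ∀ δ, Order.IsSuccLimit δ → δ < omega1 → ∀ m, c δ m < δ)
    {α β : Ordinal.{0}} (hβ : β ≤ omega1) (hαβ : ∀ δ < β, ∀ γ < δ, γ < α) :
    Sset β ⊆ Fop c (Sset α) :=
  fun ⟨n, _⟩ hδ => mem_Fop_of_forall_lt hlt n (lt_of_lt_of_le hδ hβ) (hαβ _ hδ)

lemma Fop_Sset_subset (hlt : ∀ δ, Order.IsSuccLimit δ → δ < omega1 → ∀ m, c δ m < δ)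
    (hcof : ∀ δ, Order.IsSuccLimit δ → δ < omega1 → ∀ γ < δ, ∃ m, γ ≤ c δ m)
    (α : Ordinal.{0}) : Fop c (Sset α) ⊆ Sset (α + 1) := by
  rintro ⟨n, δ⟩ ⟨hδ, hzero | ⟨γ, rfl, hγ⟩ | ⟨hlim, htail⟩⟩ <;>
    refine mem_Sset.2 (Order.lt_add_one_iff.2 ?_)
  · exact hzero ▸ zero_le
  · exact Order.add_one_le_of_lt hγ
  · refine not_lt.1 fun hαδ => ?_
    obtain ⟨m, hm, hαm⟩ :=
      exists_ge_le_of_cofinal hlim (hlt δ hlim hδ) (hcof δ hlim hδ) hαδ n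
    exact hαm.not_gt (htail m hm)

variable (hlt : ∀ δ, Order.IsSuccLimit δ → δ < omega1 → ∀ m, c δ m < δ)
  (hcof : ∀ δ, Order.IsSuccLimit δ → δ < omega1 → ∀ γ < δ, ∃ m, γ ≤ c δ m)
include hlt

lemma Fop_Sset_omega1 : Fop c (Sset omega1) = Sset omega1 :=
  (Fop_subset_Sset_omega1 _).antisymm (Sset_subset_Fop hlt le_rfl fun _ hδ _ hγ => hγ.trans hδ)

lemma Sset_omega1_subset_of_Fop_subset {X : Set (ℕ × Ordinal.{0})} (hX : Fop c X ⊆ X) :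
    Sset omega1 ⊆ X := by
  suffices h : ∀ δ < omega1, ∀ n, (n, δ) ∈ X from fun ⟨n, δ⟩ hδ => h δ hδ n
  intro δ
  induction δ using WellFoundedLT.induction with
  | _ δ ih =>
    intro hδ n
    exact hX (mem_Fop_of_forall_lt hlt n hδ fun γ hγ => ih γ hγ (hγ.trans hδ) 0)

include hcof

lemma Fop_Sset {α : Ordinal.{0}} (hα : α < omega1) : Fop c (Sset α) = Sset (α + 1) :=
  (Fop_Sset_subset hlt hcof α).antisymm <| Sset_subset_Fop hlt
    (Order.add_one_le_of_lt hα) fun _ hδ _ hγ => hγ.trans_le (Order.lt_add_one_iff.1 hδ)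

lemma iter_Fop_eq_Sset {α : Ordinal.{0}} (hα : α ≤ omega1) : iter (Fop c) α = Sset α := by
  induction α using Ordinal.limitRecOn with
  | zero => simp [iter_zero, Sset]
  | add_one β ih =>
    have hβ : β < omega1 := (lt_add_one β).trans_le hα
    rw [iter_add_one, ih hβ.le, Fop_Sset hlt hcof hβ]
  | limit β hβ ih =>
    rw [iter_of_isSuccLimit _ hβ, ← iUnion_Sset_of_isSuccLimit hβ]
    exact iUnion₂_congr fun b hb => ih b hb (hb.le.trans hα)

end Fop

theorem stmt15_general (c : Ordinal.{0} → ℕ → Ordinal.{0})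
    (hlt : ∀ δ, Order.IsSuccLimit δ → δ < omega1 → ∀ m, c δ m < δ)
    (hcof : ∀ δ, Order.IsSuccLimit δ → δ < omega1 → ∀ γ < δ, ∃ m, γ ≤ c δ m) :
    iter (Fop c) omega1 = Sset omega1 ∧
      Fop c (iter (Fop c) omega1) = iter (Fop c) omega1 ∧
      (∀ X, Fop c X ⊆ X → iter (Fop c) omega1 ⊆ X) ∧
      (∀ α < omega1, iter (Fop c) α ⊂ iter (Fop c) (α + 1)) := by
  have hfix := iter_Fop_eq_Sset hlt hcof le_rfl
  refine ⟨hfix, hfix ▸ Fop_Sset_omega1 hlt,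
    fun X hX => hfix ▸ Sset_omega1_subset_of_Fop_subset hlt hX, fun α hα => ?_⟩
  rw [iter_Fop_eq_Sset hlt hcof hα.le, iter_Fop_eq_Sset hlt hcof (Order.add_one_le_of_lt hα)]
  exact Sset_strictMono (lt_add_one α)

theorem stmt15 (c : Ordinal.{0} → ℕ → Ordinal.{0})
    (hmono : ∀ δ, Order.IsSuccLimit δ → δ < omega1 → ∀ m, c δ m ≤ c δ (m + 1))
    (hlt : ∀ δ, Order.IsSuccLimit δ → δ < omega1 → ∀ m, c δ m < δ)
    (hcof : ∀ δ, Order.IsSuccLimit δ → δ < omega1 → ∀ γ < δ, ∃ m, γ ≤ c δ m) :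
    iter (Fop c) omega1 = Sset omega1 ∧
      Fop c (iter (Fop c) omega1) = iter (Fop c) omega1 ∧
      (∀ X, Fop c X ⊆ X → iter (Fop c) omega1 ⊆ X) ∧
      (∀ α < omega1, iter (Fop c) α ⊂ iter (Fop c) (α + 1)) :=
  stmt15_general c hlt hcof
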